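/- Let I ⊂ S be a generalized Cohen–Macaulay monomial ideal with d = dim(S/I) that has a q-linear free resolution. Then H^i_m(S/I) = 0 for all i with q ≤ i < d. -/
import Mathlib


/- STATEMENT 17: let I be a generalized CM monomial ideal with d = dim S/I
having a q-linear free resolution (so I is generated in degree q and
reg(S/I) = q − 1, i.e. H^i_m(S/I)_j = 0 whenever i + j > q − 1).  Then
H^i_m(S/I) = 0 for q ≤ i < d.  Local cohomology components are computed via the
ℤⁿ-graded Čech complex (`lcRank`). -/

open Finset
open scoped Classical

noncomputable section

variable (K : Type) [Field K] {n : ℕ}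

def Ga (a : Fin n → ℤ) : Finset (Fin n) := Finset.univ.filter (fun i => a i < 0)

/-- the non-vanishing condition for the component of the Čech complex indexed by `F`. -/
def valid (G : Finset (Fin n → ℕ)) (a : Fin n → ℤ) (F : Finset (Fin n)) : Prop :=
  Ga a ⊆ F ∧ ∀ u ∈ G, ∃ j, j ∉ F ∧ 0 ≤ a j ∧ a j < (u j : ℤ)

def deltaA (G : Finset (Fin n → ℕ)) (a : Fin n → ℤ) : Set (Finset (Fin n)) :=
  { s | ∃ F : Finset (Fin n), valid G a F ∧ s = F \ Ga a }

/-- the group of `i`-chains of the augmented oriented chain complex of `Δ`, with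
coefficients in `K`: the free `K`-module on the faces of dimension `i` (cardinality
`i+1`); for `i = -1` this is spanned by `∅` if `∅ ∈ Δ`. -/
abbrev chainGroup (Δ : Set (Finset (Fin n))) (i : ℤ) : Type :=
  {F : Finset (Fin n) // F ∈ Δ ∧ (F.card : ℤ) = i + 1} →₀ K

/-- the boundary map `∂ F = Σ_j (-1)^j F_j` of the augmented oriented chain complex. -/
def bdry (Δ : Set (Finset (Fin n))) (i : ℤ) :
    chainGroup K Δ i →ₗ[K] chainGroup K Δ (i - 1) :=
  Finsupp.lsum K fun F =>
    LinearMap.toSpanSingleton K _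
      (∑ j : Fin (F.1.sort (· ≤ ·)).length,
        ((-1 : K) ^ (j : ℕ)) •
          (if h : (F.1.erase ((F.1.sort (· ≤ ·)).get j)) ∈ Δ ∧
              (((F.1.erase ((F.1.sort (· ≤ ·)).get j)).card : ℤ) = (i - 1) + 1)
           then Finsupp.single
             (⟨F.1.erase ((F.1.sort (· ≤ ·)).get j), h⟩ :
               {F' : Finset (Fin n) // F' ∈ Δ ∧ (F'.card : ℤ) = (i - 1) + 1}) (1 : K)
           else 0))

/-- `dim_K H̃_i(Δ; K)`, the dimension of the `i`-th reduced simplicial homology. -/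
def redHomRank (Δ : Set (Finset (Fin n))) (i : ℤ) : ℕ :=
  Module.finrank K (LinearMap.ker (bdry K Δ i)) -
    Module.finrank K (LinearMap.range (bdry K Δ (i + 1)))

/-- basis of the degree-`a` piece of the `t`-th term of the Čech complex of `R = S/I`
on `x_1,…,x_n` (Lemma 1 of the paper): subsets `F` with `|F| = t`, `F ⊇ G_a`,
satisfying the non-vanishing condition. -/
abbrev cechC (G : Finset (Fin n → ℕ)) (a : Fin n → ℤ) (t : ℕ) : Type :=
  {F : Finset (Fin n) // F.card = t ∧ valid G a F} →₀ K

/-- the differential of the degree-`a` piece of the Čech complex. -/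
def cechD (G : Finset (Fin n → ℕ)) (a : Fin n → ℤ) (t : ℕ) :
    cechC K G a t →ₗ[K] cechC K G a (t + 1) :=
  Finsupp.lsum K fun F =>
    LinearMap.toSpanSingleton K _
      (∑ j ∈ Finset.univ.filter (fun j => j ∉ F.1),
        ((-1 : K) ^ ((F.1.filter (fun k => k < j)).card)) •
          (if h : (insert j F.1).card = t + 1 ∧ valid G a (insert j F.1)
           then Finsupp.single (⟨insert j F.1, h⟩ :
               {F' : Finset (Fin n) // F'.card = t + 1 ∧ valid G a F'}) (1 : K)
           else 0))

/-- `dim_K H^i_m(R)_a = dim_K H^i((C^•)_a)`, the dimension of the degree-`a`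
component of the `i`-th local cohomology of `R = S/I`, computed via the
ℤⁿ-graded Čech complex on `x_1,…,x_n`. -/
def lcRank (G : Finset (Fin n → ℕ)) (a : Fin n → ℤ) (i : ℕ) : ℕ :=
  Module.finrank K (LinearMap.ker (cechD K G a i)) -
    (match i with
     | 0 => 0
     | Nat.succ i => Module.finrank K (LinearMap.range (cechD K G a i)))


def mon (u : Fin n → ℕ) : MvPolynomial (Fin n) K :=
  MvPolynomial.monomial (Finsupp.equivFunOnFinite.symm u) (1 : K)

def cechD' (P : Finset (Fin n) → Prop) (t : ℕ) :
    ({F : Finset (Fin n) // F.card = t ∧ P F} →₀ K) →ₗ[K]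
      ({F : Finset (Fin n) // F.card = t + 1 ∧ P F} →₀ K) :=
  Finsupp.lsum K fun F =>
    LinearMap.toSpanSingleton K _
      (∑ j ∈ Finset.univ.filter (fun j => j ∉ F.1),
        ((-1 : K) ^ ((F.1.filter (fun k => k < j)).card)) •
          (if h : (insert j F.1).card = t + 1 ∧ P (insert j F.1)
           then Finsupp.single (⟨insert j F.1, h⟩ :
               {F' : Finset (Fin n) // F'.card = t + 1 ∧ P F'}) (1 : K)
           else 0))

def lcRank' (P : Finset (Fin n) → Prop) (i : ℕ) : ℕ :=
  Module.finrank K (LinearMap.ker (cechD' K P i)) -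
    (match i with
     | 0 => 0
     | Nat.succ i => Module.finrank K (LinearMap.range (cechD' K P i)))

lemma lcRank_eq' (G : Finset (Fin n → ℕ)) (a : Fin n → ℤ) (i : ℕ) :
    lcRank K G a i = lcRank' K (valid G a) i := rfl

lemma lcRank_congr (G : Finset (Fin n → ℕ)) (a a' : Fin n → ℤ)
    (h : valid G a = valid G a') (i : ℕ) : lcRank K G a i = lcRank K G a' i := by
  rw [lcRank_eq', lcRank_eq', h]

lemma valid_update (G : Finset (Fin n → ℕ)) (a : Fin n → ℤ) (j0 : Fin n)
    (hj0 : a j0 < 0) (c : ℤ) (hc : c < 0) :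
    valid G (Function.update a j0 c) = valid G a := by
  have hGa : Ga (Function.update a j0 c) = Ga a := by
    ext k
    by_cases hk : k = j0
    · subst hk; simp [Ga, Function.update_self, hc, hj0]
    · simp [Ga, Function.update_of_ne hk]
  funext F
  unfold valid
  rw [hGa]
  have h2 : ∀ u : Fin n → ℕ,
      (∃ j, j ∉ F ∧ 0 ≤ Function.update a j0 c j ∧ Function.update a j0 c j < (u j : ℤ)) ↔
      (∃ j, j ∉ F ∧ 0 ≤ a j ∧ a j < (u j : ℤ)) := by
    intro u
    constructor
    · rintro ⟨j, hjF, h0, hu⟩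
      by_cases hk : j = j0
      · subst hk; rw [Function.update_self] at h0; omega
      · exact ⟨j, hjF, by rwa [Function.update_of_ne hk] at h0,
          by rwa [Function.update_of_ne hk] at hu⟩
    · rintro ⟨j, hjF, h0, hu⟩
      by_cases hk : j = j0
      · subst hk; omega
      · exact ⟨j, hjF, by rwa [Function.update_of_ne hk],
          by rwa [Function.update_of_ne hk]⟩
  simp only [eq_iff_iff]
  exact and_congr Iff.rfl (forall_congr' fun u => imp_congr Iff.rfl (h2 u))

theorem vanishing_for_linear_resolution
    (G : Finset (Fin n → ℕ))
    (hmin : ∀ u ∈ G, ∀ v ∈ G, (∀ j, u j ≤ v j) → u = v) (hne : ∀ u ∈ G, u ≠ 0)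
    (I : Ideal (MvPolynomial (Fin n) K)) (hI : I = Ideal.span ((mon K) '' G))
    (hGCM : ∀ i : ℕ, ((i : ℕ∞) : WithBot ℕ∞) ≠ ringKrullDim (MvPolynomial (Fin n) K ⧸ I) →
        {a : Fin n → ℤ | lcRank K G a i ≠ 0}.Finite)
    (q : ℕ)
    (hgen : ∀ u ∈ G, (∑ j, u j) = q)
    (hlin : ∀ (i : ℕ) (a : Fin n → ℤ), lcRank K G a i ≠ 0 → (i : ℤ) + ∑ j, a j ≤ (q : ℤ) - 1)
    (i : ℕ) (hiq : q ≤ i)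
    (hid : ((i : ℕ∞) : WithBot ℕ∞) < ringKrullDim (MvPolynomial (Fin n) K ⧸ I))
    (a : Fin n → ℤ) :
    lcRank K G a i = 0 := by
  by_contra hne0
  -- from the regularity bound, some coordinate of `a` is negative
  have hsum : (i : ℤ) + ∑ j, a j ≤ (q : ℤ) - 1 := hlin i a hne0
  have hneg : ∃ j0, a j0 < 0 := by
    by_contra hall
    push_neg at hall
    have : (0 : ℤ) ≤ ∑ j, a j := Finset.sum_nonneg fun j _ => hall j
    have : (q : ℤ) ≤ (i : ℤ) := by exact_mod_cast hiq
    omega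
  obtain ⟨j0, hj0⟩ := hneg
  -- pushing the negative coordinate down gives infinitely many nonzero degrees
  have hmem : ∀ t : ℕ, Function.update a j0 (a j0 - (t + 1)) ∈
      {b : Fin n → ℤ | lcRank K G b i ≠ 0} := by
    intro t
    have hc : a j0 - ((t : ℤ) + 1) < 0 := by omega
    have := lcRank_congr K G (Function.update a j0 (a j0 - ((t : ℤ) + 1))) a
      (valid_update G a j0 hj0 _ hc) i
    simpa [this] using hne0
  have hinj : Function.Injective
      (fun t : ℕ => Function.update a j0 (a j0 - ((t : ℤ) + 1))) := by
    intro s t hst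
    have := congrFun hst j0
    simp only [Function.update_self] at this
    omega
  have hfin : {b : Fin n → ℤ | lcRank K G b i ≠ 0}.Finite :=
    hGCM i (ne_of_lt hid)
  exact (Set.infinite_of_injective_forall_mem hinj
    (fun t => hmem t)) hfin


end
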